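/- Let T₁ ∼ χ²₂(λ_A) and T₂ ∼ χ²₂(λ_B) be independent noncentral chi-squared random variables with λ_A > λ_B ≥ 0. Then Pr{T₁ > T₂} > 1/2. -/

import Mathlib

/-!
Write `F_c` for the distribution function of `(X + c)² + Y²` with `X, Y` independent standard
normals. Given `Y = y`, the event `(X + c)² + Y² ≤ t` says that `X` lies in an interval of length
`2√(t - y²)` centred at `-c`; since the Gaussian density is symmetric and decreasing in `|x|`, this
interval loses mass as `c ≥ 0` grows. Hence `F_a < F_b` on `(0, ∞)` for `a = √λ_A > b = √λ_B`,
so `T₁` is strictly stochastically larger than `T₂`, and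
`Pr{T₂ < T₁} = ∫ (1 - F_a) dF_b > ∫ (1 - F_b) dF_b = 1/2`,
the last value because `F_b` has no atoms.
-/

open MeasureTheory ProbabilityTheory Set
open scoped ENNReal

namespace MeasureTheory.Measure

variable {α : Type*} [MeasurableSpace α]

lemma prod_diagonal_eq_zero [MeasurableEq α] (μ ν : Measure α) [SFinite ν]
    [NullSingletonClass ν] : (μ.prod ν) (diagonal α) = 0 := by
  rw [prod_apply measurableSet_diagonal]
  have hslice (x : α) : Prod.mk x ⁻¹' diagonal α = {x} := by
    ext y
    simp [eq_comm]
  simp [hslice]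

variable {μ μ' ν : Measure ℝ}

lemma prod_setOf_snd_lt_fst [SFinite μ] [SFinite ν] :
    (μ.prod ν) {p : ℝ × ℝ | p.2 < p.1} = ∫⁻ y, μ (Ioi y) ∂ν :=
  prod_apply_symm (measurableSet_lt measurable_snd measurable_fst)

lemma prod_self_setOf_snd_lt_fst [IsProbabilityMeasure μ] [NullSingletonClass μ] :
    (μ.prod μ) {p : ℝ × ℝ | p.2 < p.1} = 2⁻¹ := by
  set A := {p : ℝ × ℝ | p.2 < p.1}
  have hA : MeasurableSet A := measurableSet_lt measurable_snd measurable_fst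
  have hswap : (μ.prod μ) {p : ℝ × ℝ | p.1 < p.2} = (μ.prod μ) A := by
    conv_lhs => rw [← prod_swap]
    exact map_apply measurable_swap (measurableSet_lt measurable_fst measurable_snd)
  have hcompl : (μ.prod μ) Aᶜ = (μ.prod μ) A := by
    have hsplit : Aᶜ = {p : ℝ × ℝ | p.1 < p.2} ∪ diagonal ℝ := by
      ext p
      simp [A, le_iff_lt_or_eq]
    refine le_antisymm ?_ (hswap ▸ measure_mono fun p (hp : p.1 < p.2) ↦ not_lt.2 hp.le)
    calc (μ.prod μ) Aᶜ ≤ (μ.prod μ) {p : ℝ × ℝ | p.1 < p.2} + (μ.prod μ) (diagonal ℝ) :=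
          hsplit ▸ measure_union_le _ _
      _ = (μ.prod μ) A := by rw [prod_diagonal_eq_zero, add_zero, hswap]
  have htotal := measure_add_measure_compl (μ := μ.prod μ) hA
  rw [hcompl, measure_univ, ← two_mul] at htotal
  exact ENNReal.eq_inv_of_mul_eq_one_left (mul_comm _ (2 : ℝ≥0∞) ▸ htotal)

lemma measure_Ioi_lt_measure_Ioi_iff [IsProbabilityMeasure μ] [IsProbabilityMeasure μ'] {t : ℝ} :
    μ (Ioi t) < μ' (Ioi t) ↔ μ' (Iic t) < μ (Iic t) := by
  rw [← compl_Iic, prob_compl_eq_one_sub measurableSet_Iic, prob_compl_eq_one_sub measurableSet_Iic,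
    ← ENNReal.toReal_lt_toReal (by simp) (by simp), ← ENNReal.toReal_lt_toReal (by simp) (by simp),
    ENNReal.toReal_sub_of_le prob_le_one ENNReal.one_ne_top,
    ENNReal.toReal_sub_of_le prob_le_one ENNReal.one_ne_top]
  constructor <;> intro h <;> linarith

lemma prod_setOf_snd_lt_fst_lt [IsProbabilityMeasure μ] [IsProbabilityMeasure μ']
    [IsFiniteMeasure ν] {s : Set ℝ} (hs : ν s ≠ 0) (hle : ∀ t, μ' (Iic t) ≤ μ (Iic t))
    (hlt : ∀ t ∈ s, μ' (Iic t) < μ (Iic t)) :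
    (μ.prod ν) {p : ℝ × ℝ | p.2 < p.1} < (μ'.prod ν) {p : ℝ × ℝ | p.2 < p.1} := by
  have hfin := measure_ne_top (μ.prod ν) {p : ℝ × ℝ | p.2 < p.1}
  rw [prod_setOf_snd_lt_fst] at hfin
  rw [prod_setOf_snd_lt_fst, prod_setOf_snd_lt_fst]
  have hmeas : Measurable fun t ↦ μ' (Ioi t) :=
    Antitone.measurable fun _ _ hst ↦ measure_mono (Ioi_subset_Ioi hst)
  refine lintegral_strict_mono_of_ae_le_of_ae_lt_on hmeas.aemeasurable hfin
    (ae_of_all _ fun t ↦ ?_) hs (ae_of_all _ fun t ht ↦ measure_Ioi_lt_measure_Ioi_iff.2 (hlt t ht))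
  exact not_lt.1 fun h ↦ (hle t).not_gt (measure_Ioi_lt_measure_Ioi_iff.1 h)

end MeasureTheory.Measure

open Measure

local notation "ν" => gaussianReal 0 1
local notation "φ" => gaussianPDFReal 0 1

instance : NullSingletonClass ν := nullSingletonClass_gaussianReal one_ne_zero

lemma gaussianPDFReal_lt_of_sq_lt {x y : ℝ} (h : x ^ 2 < y ^ 2) : φ y < φ x := by
  unfold gaussianPDFReal
  refine mul_lt_mul_of_pos_left (Real.exp_lt_exp.2 ?_) (by positivity)
  simp only [NNReal.coe_one]
  linarith

lemma integral_gaussianPDFReal_lt_of_lt {a b r : ℝ} (hb : 0 ≤ b) (hab : b < a) (hr : 0 < r) :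
    ∫ x in (-a - r)..(-a + r), φ x < ∫ x in (-b - r)..(-b + r), φ x := by
  have hφ (u v : ℝ) : IntervalIntegrable φ volume u v :=
    (integrable_gaussianPDFReal 0 1).intervalIntegrable
  have hφshift (u v : ℝ) : IntervalIntegrable (fun x ↦ φ (x - 2 * r)) volume u v :=
    ((integrable_gaussianPDFReal 0 1).comp_sub_right (2 * r)).intervalIntegrable
  -- both intervals share `[-b - r, -a + r]`; what remains is one interval and its shift by `2r`
  have hdiff : (∫ x in (-b - r)..(-b + r), φ x) - ∫ x in (-a - r)..(-a + r), φ x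
      = ∫ x in (-a + r)..(-b + r), (φ x - φ (x - 2 * r)) := by
    rw [intervalIntegral.integral_sub (hφ _ _) (hφshift _ _),
      intervalIntegral.integral_comp_sub_right (fun x ↦ φ x), show -a + r - 2 * r = -a - r by ring,
      show -b + r - 2 * r = -b - r by ring]
    have h₁ := intervalIntegral.integral_add_adjacent_intervals
      (hφ (-a - r) (-b - r)) (hφ _ (-b + r))
    have h₂ := intervalIntegral.integral_add_adjacent_intervals
      (hφ (-a - r) (-a + r)) (hφ _ (-b + r))
    linarith
  have hpos : 0 < ∫ x in (-a + r)..(-b + r), (φ x - φ (x - 2 * r)) := by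
    refine intervalIntegral.intervalIntegral_pos_of_pos_on ((hφ _ _).sub (hφshift _ _))
      (fun x hx ↦ sub_pos.2 (gaussianPDFReal_lt_of_sq_lt ?_)) (by linarith)
    nlinarith [hx.2]
  linarith

lemma gaussianReal_Icc_lt_of_lt {a b r : ℝ} (hb : 0 ≤ b) (hab : b < a) (hr : 0 < r) :
    ν (Icc (-a - r) (-a + r)) < ν (Icc (-b - r) (-b + r)) := by
  have hIcc (c : ℝ) :
      ν (Icc (-c - r) (-c + r)) = ENNReal.ofReal (∫ x in (-c - r)..(-c + r), φ x) := by
    rw [gaussianReal_apply_eq_integral _ one_ne_zero, integral_Icc_eq_integral_Ioc,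
      intervalIntegral.integral_of_le (by linarith)]
  rw [hIcc, hIcc, ENNReal.ofReal_lt_ofReal_iff (intervalIntegral.intervalIntegral_pos_of_pos
    (integrable_gaussianPDFReal 0 1).intervalIntegrable (gaussianPDFReal_pos 0 1 · one_ne_zero)
    (by linarith))]
  exact integral_gaussianPDFReal_lt_of_lt hb hab hr

lemma setOf_add_sq_add_sq_le_eq_Icc {c t y : ℝ} (h : y ^ 2 ≤ t) :
    {x : ℝ | (x + c) ^ 2 + y ^ 2 ≤ t}
      = Icc (-c - √(t - y ^ 2)) (-c + √(t - y ^ 2)) := by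
  have hsq : √(t - y ^ 2) ^ 2 = t - y ^ 2 := Real.sq_sqrt (by linarith)
  have hnonneg : 0 ≤ √(t - y ^ 2) := Real.sqrt_nonneg _
  ext x
  simp only [mem_ofPred_eq, mem_Icc]
  constructor
  · intro hx
    constructor <;> nlinarith
  · rintro ⟨h₁, h₂⟩
    nlinarith

lemma gaussianReal_setOf_add_sq_add_sq_le_lt {a b y t : ℝ} (hb : 0 ≤ b) (hab : b < a)
    (h : y ^ 2 < t) :
    ν {x | (x + a) ^ 2 + y ^ 2 ≤ t} < ν {x | (x + b) ^ 2 + y ^ 2 ≤ t} := by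
  rw [setOf_add_sq_add_sq_le_eq_Icc h.le, setOf_add_sq_add_sq_le_eq_Icc h.le]
  exact gaussianReal_Icc_lt_of_lt hb hab (Real.sqrt_pos.2 (by linarith))

lemma gaussianReal_setOf_add_sq_add_sq_le_le {a b : ℝ} (hb : 0 ≤ b) (hab : b < a) (y t : ℝ) :
    ν {x | (x + a) ^ 2 + y ^ 2 ≤ t} ≤ ν {x | (x + b) ^ 2 + y ^ 2 ≤ t} := by
  rcases lt_or_ge (y ^ 2) t with h | h
  · exact (gaussianReal_setOf_add_sq_add_sq_le_lt hb hab h).le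
  · have hsub : {x : ℝ | (x + a) ^ 2 + y ^ 2 ≤ t} ⊆ {-a} := fun x (hx : _ ≤ t) ↦ by
      rw [mem_singleton_iff]
      nlinarith
    simp [measure_mono_null hsub (measure_singleton _)]

/-- `χ²₂(λ)`, parametrized by `c = √λ`. -/
noncomputable def noncentralChiSqTwo (c : ℝ) : Measure ℝ :=
  (Measure.prod ν ν).map fun p ↦ (p.1 + c) ^ 2 + p.2 ^ 2

lemma measurable_add_sq_add_sq (c : ℝ) : Measurable fun p : ℝ × ℝ ↦ (p.1 + c) ^ 2 + p.2 ^ 2 := by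
  fun_prop

instance (c : ℝ) : IsProbabilityMeasure (noncentralChiSqTwo c) :=
  isProbabilityMeasure_map (measurable_add_sq_add_sq c).aemeasurable

lemma noncentralChiSqTwo_apply (c : ℝ) {s : Set ℝ} (hs : MeasurableSet s) :
    noncentralChiSqTwo c s = ∫⁻ y, ν {x | (x + c) ^ 2 + y ^ 2 ∈ s} ∂ν := by
  rw [noncentralChiSqTwo, map_apply (measurable_add_sq_add_sq c) hs,
    prod_apply_symm (measurable_add_sq_add_sq c hs)]
  rfl

instance (c : ℝ) : NullSingletonClass (noncentralChiSqTwo c) where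
  measure_singleton t := by
    rw [noncentralChiSqTwo_apply c (measurableSet_singleton t)]
    refine lintegral_eq_zero_of_ae_eq_zero (ae_of_all _ fun y ↦ ?_)
    refine measure_mono_null (fun x hx ↦ ?_)
      ((toFinite {-c + √(t - y ^ 2), -c - √(t - y ^ 2)}).measure_zero ν)
    have hx : (x + c) ^ 2 = t - y ^ 2 := by
      rw [mem_ofPred_eq, mem_singleton_iff] at hx
      linarith
    rw [← Real.sq_sqrt (hx ▸ sq_nonneg _ : 0 ≤ t - y ^ 2), sq_eq_sq_iff_eq_or_eq_neg] at hx
    simp only [mem_insert_iff, mem_singleton_iff]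
    rcases hx with hx | hx
    · exact Or.inl (by linarith)
    · exact Or.inr (by linarith)

lemma noncentralChiSqTwo_Ioi_zero (c : ℝ) : noncentralChiSqTwo c (Ioi 0) = 1 := by
  have hIio : noncentralChiSqTwo c (Iio 0) = 0 := by
    rw [noncentralChiSqTwo, map_apply (measurable_add_sq_add_sq c) measurableSet_Iio]
    convert measure_empty (μ := Measure.prod ν ν)
    exact eq_empty_of_forall_notMem fun p (hp : (p.1 + c) ^ 2 + p.2 ^ 2 < 0) ↦
      hp.not_ge (by positivity)
  rw [measure_congr Ioi_ae_eq_Ici, ← compl_Iio, prob_compl_eq_one_sub measurableSet_Iio, hIio,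
    tsub_zero]

lemma noncentralChiSqTwo_Iic_le {a b : ℝ} (hb : 0 ≤ b) (hab : b < a) (t : ℝ) :
    noncentralChiSqTwo a (Iic t) ≤ noncentralChiSqTwo b (Iic t) := by
  rw [noncentralChiSqTwo_apply a measurableSet_Iic, noncentralChiSqTwo_apply b measurableSet_Iic]
  exact lintegral_mono fun y ↦ gaussianReal_setOf_add_sq_add_sq_le_le hb hab y t

lemma noncentralChiSqTwo_Iic_lt {a b t : ℝ} (hb : 0 ≤ b) (hab : b < a) (ht : 0 < t) :
    noncentralChiSqTwo a (Iic t) < noncentralChiSqTwo b (Iic t) := by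
  have hfin := measure_ne_top (noncentralChiSqTwo a) (Iic t)
  rw [noncentralChiSqTwo_apply a measurableSet_Iic] at hfin
  rw [noncentralChiSqTwo_apply a measurableSet_Iic, noncentralChiSqTwo_apply b measurableSet_Iic]
  have hmeas : Measurable fun y ↦ ν {x | (x + b) ^ 2 + y ^ 2 ∈ Iic t} :=
    measurable_measure_prodMk_right (measurable_add_sq_add_sq b measurableSet_Iic)
  refine lintegral_strict_mono_of_ae_le_of_ae_lt_on (s := Ioo (-√t) √t) hmeas.aemeasurable hfin
    (ae_of_all _ fun y ↦ gaussianReal_setOf_add_sq_add_sq_le_le hb hab y t) ?_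
    (ae_of_all _ fun y hy ↦ gaussianReal_setOf_add_sq_add_sq_le_lt hb hab ?_)
  · intro h
    have := gaussianReal_absolutelyContinuous' 0 one_ne_zero h
    rw [Real.volume_Ioo, ENNReal.ofReal_eq_zero] at this
    linarith [Real.sqrt_pos.2 ht]
  · have := Real.sq_sqrt ht.le
    nlinarith [hy.1, hy.2]

lemma noncentralChiSqTwo_prod_setOf_snd_lt_fst {a b : ℝ} (hb : 0 ≤ b) (hab : b < a) :
    2⁻¹ < ((noncentralChiSqTwo a).prod (noncentralChiSqTwo b)) {p : ℝ × ℝ | p.2 < p.1} :=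
  prod_self_setOf_snd_lt_fst (μ := noncentralChiSqTwo b) ▸
    prod_setOf_snd_lt_fst_lt (s := Ioi 0) (by rw [noncentralChiSqTwo_Ioi_zero]; exact one_ne_zero)
      (noncentralChiSqTwo_Iic_le hb hab) fun _ ht ↦ noncentralChiSqTwo_Iic_lt hb hab ht

/-- For independent noncentral chi-squared variables `T₁ ∼ χ²₂(λA)` and `T₂ ∼ χ²₂(λB)`
with `λA > λB ≥ 0` (each realized as the law of `(X+√λ)² + Y²` for independent standard
normals), the better-aligned statistic wins with probability exceeding `1/2`:
`Pr{T₁ > T₂} > 1/2`. -/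
theorem stmt13 {Ω : Type*} [MeasurableSpace Ω] (P : Measure Ω) [IsProbabilityMeasure P]
    (lamA lamB : ℝ) (hB : 0 ≤ lamB) (hAB : lamB < lamA)
    (T₁ T₂ : Ω → ℝ) (hT₁ : Measurable T₁) (hT₂ : Measurable T₂)
    (hlaw₁ : Measure.map T₁ P = Measure.map
      (fun p : ℝ × ℝ => (p.1 + Real.sqrt lamA) ^ 2 + p.2 ^ 2)
      ((gaussianReal 0 1).prod (gaussianReal 0 1)))
    (hlaw₂ : Measure.map T₂ P = Measure.map
      (fun p : ℝ × ℝ => (p.1 + Real.sqrt lamB) ^ 2 + p.2 ^ 2)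
      ((gaussianReal 0 1).prod (gaussianReal 0 1)))
    (hind : IndepFun T₁ T₂ P) :
    (P {ω | T₂ ω < T₁ ω}).toReal > 1 / 2 := by
  have hjoint : P.map (fun ω ↦ (T₁ ω, T₂ ω))
      = (noncentralChiSqTwo √lamA).prod (noncentralChiSqTwo √lamB) := by
    rw [(indepFun_iff_map_prod_eq_prod_map_map hT₁.aemeasurable hT₂.aemeasurable).1 hind,
      hlaw₁, hlaw₂]
    rfl
  have hP : P {ω | T₂ ω < T₁ ω}
      = ((noncentralChiSqTwo √lamA).prod (noncentralChiSqTwo √lamB)) {p : ℝ × ℝ | p.2 < p.1} := by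
    rw [← hjoint, map_apply (hT₁.prodMk hT₂) (measurableSet_lt measurable_snd measurable_fst)]
    rfl
  have hhalf := noncentralChiSqTwo_prod_setOf_snd_lt_fst (Real.sqrt_nonneg lamB)
    (Real.sqrt_lt_sqrt hB hAB)
  rw [← hP] at hhalf
  simpa using (ENNReal.toReal_lt_toReal (by simp) (measure_ne_top P _)).2 hhalf
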